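/- For β ∈ (0,1) and ξ ≥ 0 define Y(ξ,β) := 2·cos²(πβ/2)·cosh(πξ/2)/( cos²(πβ/2) + sinh²(πξ/2) ), and for Y₀ ∈ (0,2] define X̂₀(Y₀,β) := sqrt( 2·( sqrt( cos⁴(πβ/2) + sin²(πβ/2)·Y₀² ) + cos²(πβ/2) ) − Y₀² ). Then: (i) for each β, the map ξ ↦ Y(ξ,β) is strictly decreasing on [0,∞), with Y(0,β) = 2 and Y(ξ,β) → 0 as ξ → ∞; (ii) for each Y₀ ∈ (0,2], the unique ξ₀ = ξ₀(Y₀,β) ∈ [0,∞) with Y(ξ₀,β) = Y₀ satisfies sinh(π·ξ₀/2) = ( cos(πβ/2)/Y₀ )·X̂₀(Y₀,β); (iii) setting h(β) := (4/π)·tan²(πβ/2)·sec(πβ/2) and X̃₀(Y₀,β) := ξ₀(Y₀,β)/h(β) + X̂₀(Y₀,β), one has X̃₀(Y₀,β) → sqrt(2Y₀ − Y₀²) as β → 1⁻, uniformly for Y₀ in compact subsets of (0,2]. -/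

import Mathlib

open Set Filter

/-- The rescaled height `Y(ξ,β)` of the surface of the explicit zero-gravity solitary wave. -/
noncomputable def Yfun (β ξ : ℝ) : ℝ :=
  2 * Real.cos (Real.pi * β / 2) ^ 2 * Real.cosh (Real.pi * ξ / 2) /
    (Real.cos (Real.pi * β / 2) ^ 2 + Real.sinh (Real.pi * ξ / 2) ^ 2)

/-- The function `X̂₀(Y₀,β)`. -/
noncomputable def Xhat (β Y₀ : ℝ) : ℝ :=
  Real.sqrt (2 * (Real.sqrt (Real.cos (Real.pi * β / 2) ^ 4 +
    Real.sin (Real.pi * β / 2) ^ 2 * Y₀ ^ 2) + Real.cos (Real.pi * β / 2) ^ 2) - Y₀ ^ 2)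

/-- The normalization `h(β) = (4/π)·tan²(πβ/2)·sec(πβ/2)`. -/
noncomputable def hCNK (β : ℝ) : ℝ :=
  4 / Real.pi * Real.tan (Real.pi * β / 2) ^ 2 / Real.cos (Real.pi * β / 2)

/-! With `c = cos(πβ/2)`, `s = sin(πβ/2)` and `u = cosh(πξ/2)` one has `Y = 2c² u / (u² - s²)`,
a decreasing function of `u ≥ 1` that tends to `0`. The inverse is `ξ₀ = (2/π) arsinh(c X̂₀ / Y₀)`:
with `S = √(c⁴ + s²Y₀²)` one finds `cosh(πξ₀/2) = (S + c²)/Y₀`, and `Y(ξ₀) = Y₀` is then algebra.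
For (iii), `arsinh x ≤ x` and `X̂₀ ≤ 2` give `ξ₀/h ≤ c⁴/(s²Y₀)`, while `|S - Y₀| ≤ 4c²/Y₀` gives
`|X̂₀ - √(2Y₀ - Y₀²)| ≤ c √(2 + 8/Y₀)`; both bounds vanish as `β → 1`, uniformly for `Y₀ ≥ a`. -/

open Real

lemma Yfun_eq (β ξ : ℝ) :
    Yfun β ξ = 2 * cos (π * β / 2) ^ 2 *
      (cosh (π * ξ / 2) / (cosh (π * ξ / 2) ^ 2 - sin (π * β / 2) ^ 2)) := by
  rw [Yfun, sinh_sq, ← cos_sq_add_sin_sq (π * β / 2), mul_div_assoc]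
  ring_nf

lemma strictAntiOn_div_sq_sub {k : ℝ} (hk₀ : -1 < k) (hk₁ : k < 1) :
    StrictAntiOn (fun u : ℝ => u / (u ^ 2 - k)) (Ici 1) := by
  intro x (hx : 1 ≤ x) y (hy : 1 ≤ y) hxy
  rw [div_lt_div_iff₀ (by nlinarith) (by nlinarith)]
  nlinarith [mul_pos (sub_pos.2 hxy) (show 0 < x * y + k by nlinarith)]

lemma tendsto_div_sq_sub_atTop (k : ℝ) :
    Tendsto (fun u : ℝ => u / (u ^ 2 - k)) atTop (nhds 0) := by
  have hcont : ContinuousAt (fun v : ℝ => v / (1 - k * v ^ 2)) 0 := by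
    fun_prop (disch := norm_num)
  have h := hcont.tendsto.comp tendsto_inv_atTop_zero
  rw [zero_div] at h
  refine h.congr' ?_
  filter_upwards [eventually_gt_atTop 0] with u hu
  simp only [Function.comp_apply]
  field_simp

lemma tendsto_cosh_pi_mul_div_two_atTop :
    Tendsto (fun ξ : ℝ => cosh (π * ξ / 2)) atTop atTop := by
  refine tendsto_atTop_mono (fun ξ => ?_) ((tendsto_exp_atTop.comp
    ((tendsto_id.const_mul_atTop pi_pos).atTop_div_const two_pos)).atTop_div_const two_pos)
  rw [cosh_eq]
  have := exp_pos (-(π * ξ / 2))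
  simp only [Function.comp_apply, id]
  linarith

section

variable {β : ℝ}

lemma cos_pi_mul_div_two_pos (hβ : β ∈ Ioo (0 : ℝ) 1) : 0 < cos (π * β / 2) :=
  cos_pos_of_mem_Ioo ⟨by nlinarith [pi_pos, hβ.1], by nlinarith [pi_pos, hβ.2]⟩

lemma sin_pi_mul_div_two_pos (hβ : β ∈ Ioo (0 : ℝ) 1) : 0 < sin (π * β / 2) :=
  sin_pos_of_pos_of_lt_pi (by nlinarith [pi_pos, hβ.1]) (by nlinarith [pi_pos, hβ.2])

lemma Yfun_strictAntiOn (hc : cos (π * β / 2) ≠ 0) : StrictAntiOn (Yfun β) (Ici 0) := by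
  intro x (hx : 0 ≤ x) y (hy : 0 ≤ y) hxy
  have hcosh : cosh (π * x / 2) < cosh (π * y / 2) :=
    cosh_strictMonoOn (by simp only [mem_Ici]; positivity) (by simp only [mem_Ici]; positivity)
      (by linarith [mul_lt_mul_of_pos_left hxy pi_pos])
  have hsin : sin (π * β / 2) ^ 2 < 1 := by
    nlinarith [sin_sq_add_cos_sq (π * β / 2), pow_pos (abs_pos.2 hc) 2, sq_abs (cos (π * β / 2))]
  rw [Yfun_eq, Yfun_eq]
  exact mul_lt_mul_of_pos_left
    (strictAntiOn_div_sq_sub (by nlinarith) hsin (one_le_cosh _) (one_le_cosh _) hcosh)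
    (by positivity)

lemma Yfun_zero (hc : cos (π * β / 2) ≠ 0) : Yfun β 0 = 2 := by
  rw [Yfun, mul_zero, zero_div, cosh_zero, sinh_zero]
  field_simp
  ring

lemma tendsto_Yfun_atTop (β : ℝ) : Tendsto (Yfun β) atTop (nhds 0) := by
  have := ((tendsto_div_sq_sub_atTop (sin (π * β / 2) ^ 2)).comp
    tendsto_cosh_pi_mul_div_two_atTop).const_mul (2 * cos (π * β / 2) ^ 2)
  rw [mul_zero] at this
  exact this.congr fun ξ => (Yfun_eq β ξ).symm

end

noncomputable def xiZero (Y₀ β : ℝ) : ℝ :=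
  2 / π * arsinh (cos (π * β / 2) / Y₀ * Xhat β Y₀)

section

variable {β Y₀ : ℝ}

lemma sq_le_two_mul_sqrt_add (β : ℝ) (hY : Y₀ ^ 2 ≤ 4) :
    Y₀ ^ 2 ≤ 2 * (√(cos (π * β / 2) ^ 4 + sin (π * β / 2) ^ 2 * Y₀ ^ 2) + cos (π * β / 2) ^ 2) := by
  set c := cos (π * β / 2)
  set S := √(c ^ 4 + sin (π * β / 2) ^ 2 * Y₀ ^ 2)
  have hS : S ^ 2 = c ^ 4 + (1 - c ^ 2) * Y₀ ^ 2 := by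
    rw [sq_sqrt (by positivity), ← sin_sq_add_cos_sq (π * β / 2)]
    ring
  -- if `Y₀² > 2c²` then `S² - (Y₀²/2 - c²)² = Y₀²(4 - Y₀²)/4 ≥ 0`
  nlinarith [sqrt_nonneg (c ^ 4 + sin (π * β / 2) ^ 2 * Y₀ ^ 2), mul_nonneg (sq_nonneg Y₀) (sub_nonneg.2 hY)]

lemma Xhat_sq (β : ℝ) (hY : Y₀ ^ 2 ≤ 4) :
    Xhat β Y₀ ^ 2 =
      2 * (√(cos (π * β / 2) ^ 4 + sin (π * β / 2) ^ 2 * Y₀ ^ 2) + cos (π * β / 2) ^ 2) - Y₀ ^ 2 :=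
  sq_sqrt (sub_nonneg.2 (sq_le_two_mul_sqrt_add β hY))

lemma sinh_pi_mul_xiZero_div_two (Y₀ β : ℝ) :
    sinh (π * xiZero Y₀ β / 2) = cos (π * β / 2) / Y₀ * Xhat β Y₀ := by
  rw [xiZero, show ∀ A, π * (2 / π * A) / 2 = A from fun A => by field_simp, sinh_arsinh]

lemma cosh_pi_mul_xiZero_div_two (β : ℝ) (hY₀ : 0 < Y₀) (hY : Y₀ ≤ 2) :
    cosh (π * xiZero Y₀ β / 2) =
      (√(cos (π * β / 2) ^ 4 + sin (π * β / 2) ^ 2 * Y₀ ^ 2) + cos (π * β / 2) ^ 2) / Y₀ := by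
  have hX := Xhat_sq β (show Y₀ ^ 2 ≤ 4 by nlinarith)
  set c := cos (π * β / 2)
  set S := √(c ^ 4 + sin (π * β / 2) ^ 2 * Y₀ ^ 2)
  have hS : S ^ 2 = c ^ 4 + sin (π * β / 2) ^ 2 * Y₀ ^ 2 := sq_sqrt (by positivity)
  have hsq : cosh (π * xiZero Y₀ β / 2) ^ 2 = ((S + c ^ 2) / Y₀) ^ 2 := by
    rw [cosh_sq, sinh_pi_mul_xiZero_div_two]
    field_simp
    linear_combination c ^ 2 * hX - hS - Y₀ ^ 2 * sin_sq_add_cos_sq (π * β / 2)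
  exact (pow_left_inj₀ (cosh_pos _).le (by positivity) two_ne_zero).1 hsq

lemma xiZero_nonneg (hc : 0 ≤ cos (π * β / 2)) (hY₀ : 0 ≤ Y₀) : 0 ≤ xiZero Y₀ β :=
  mul_nonneg (by positivity) (arsinh_nonneg_iff.2 (by unfold Xhat; positivity))

lemma Yfun_xiZero (hc : cos (π * β / 2) ≠ 0) (hY₀ : 0 < Y₀) (hY : Y₀ ≤ 2) :
    Yfun β (xiZero Y₀ β) = Y₀ := by
  have hX := Xhat_sq β (show Y₀ ^ 2 ≤ 4 by nlinarith)
  rw [Yfun, sinh_pi_mul_xiZero_div_two, cosh_pi_mul_xiZero_div_two β hY₀ hY]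
  set c := cos (π * β / 2)
  set S := √(c ^ 4 + sin (π * β / 2) ^ 2 * Y₀ ^ 2)
  have hden : c ^ 2 + (c / Y₀ * Xhat β Y₀) ^ 2 = 2 * c ^ 2 * (S + c ^ 2) / Y₀ ^ 2 := by
    field_simp
    linear_combination hX
  have : 0 < S + c ^ 2 := by positivity
  rw [hden]
  field_simp

end

lemma abs_sqrt_sub_sqrt_le {A B : ℝ} (hA : 0 ≤ A) (hB : 0 ≤ B) :
    |√A - √B| ≤ √|A - B| := by
  wlog h : B ≤ A generalizing A B
  · rw [abs_sub_comm, abs_sub_comm A B]; exact this hB hA (le_of_not_ge h)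
  rw [abs_of_nonneg (sub_nonneg.2 (sqrt_le_sqrt h)), abs_of_nonneg (sub_nonneg.2 h),
    sub_le_iff_le_add', sqrt_le_left (by positivity)]
  nlinarith [sq_sqrt hB, sq_sqrt (sub_nonneg.2 h), mul_nonneg (sqrt_nonneg B) (sqrt_nonneg (A - B))]

lemma hCNK_eq (β : ℝ) : hCNK β = 4 * sin (π * β / 2) ^ 2 / (π * cos (π * β / 2) ^ 3) := by
  rw [hCNK, tan_eq_sin_div_cos]
  ring

section

variable {β Y₀ a : ℝ}

lemma Xhat_le_two (β Y₀ : ℝ) : Xhat β Y₀ ≤ 2 := by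
  set c := cos (π * β / 2)
  set s := sin (π * β / 2)
  have hcs := sin_sq_add_cos_sq (π * β / 2)
  have hS : √(c ^ 4 + s ^ 2 * Y₀ ^ 2) ≤ c ^ 2 + |s| * |Y₀| := by
    rw [sqrt_le_left (by positivity)]
    nlinarith [sq_abs s, sq_abs Y₀, mul_nonneg (sq_nonneg c) (mul_nonneg (abs_nonneg s) (abs_nonneg Y₀))]
  rw [Xhat, sqrt_le_left zero_le_two]
  nlinarith [sq_abs s, sq_abs Y₀, sq_nonneg (|s| - |Y₀|), cos_sq_le_one (π * β / 2)]

lemma xiZero_le (hc : 0 ≤ cos (π * β / 2)) (hY₀ : 0 ≤ Y₀) :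
    xiZero Y₀ β ≤ 4 * cos (π * β / 2) / (π * Y₀) := by
  have hx : 0 ≤ cos (π * β / 2) / Y₀ * Xhat β Y₀ := by unfold Xhat; positivity
  have harsinh : arsinh (cos (π * β / 2) / Y₀ * Xhat β Y₀) ≤ cos (π * β / 2) / Y₀ * 2 := by
    rw [← sinh_le_sinh, sinh_arsinh]
    exact (self_le_sinh_iff.2 hx).trans (sinh_le_sinh.2
      (mul_le_mul_of_nonneg_left (Xhat_le_two β Y₀) (by positivity)))
  calc xiZero Y₀ β ≤ 2 / π * (cos (π * β / 2) / Y₀ * 2) :=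
        mul_le_mul_of_nonneg_left harsinh (by positivity)
    _ = 4 * cos (π * β / 2) / (π * Y₀) := by field_simp; ring

lemma abs_sqrt_cos_pow_four_add_sub_le (ha : 0 < a) (haY : a ≤ Y₀) (hY : Y₀ ≤ 2) :
    |√(cos (π * β / 2) ^ 4 + sin (π * β / 2) ^ 2 * Y₀ ^ 2) - Y₀| ≤ 4 * cos (π * β / 2) ^ 2 / a := by
  set c := cos (π * β / 2)
  set S := √(c ^ 4 + sin (π * β / 2) ^ 2 * Y₀ ^ 2)
  have hS : S ^ 2 = c ^ 4 + sin (π * β / 2) ^ 2 * Y₀ ^ 2 := sq_sqrt (by positivity)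
  have hc : c ^ 2 ≤ 1 := cos_sq_le_one _
  have hdiff : |c ^ 2 - Y₀ ^ 2| ≤ 4 := abs_le.2 ⟨by nlinarith, by nlinarith⟩
  have hSY : a ≤ S + Y₀ := by linarith [sqrt_nonneg (c ^ 4 + sin (π * β / 2) ^ 2 * Y₀ ^ 2)]
  rw [le_div_iff₀ ha]
  calc |S - Y₀| * a ≤ |S - Y₀| * (S + Y₀) := mul_le_mul_of_nonneg_left hSY (abs_nonneg _)
    _ = c ^ 2 * |c ^ 2 - Y₀ ^ 2| := by
        rw [← abs_of_nonneg (show 0 ≤ S + Y₀ by linarith), ← abs_mul,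
          ← abs_of_nonneg (sq_nonneg c), ← abs_mul, abs_of_nonneg (sq_nonneg c)]
        congr 1
        linear_combination hS + Y₀ ^ 2 * sin_sq_add_cos_sq (π * β / 2)
    _ ≤ 4 * c ^ 2 := by nlinarith [sq_nonneg c]

lemma abs_Xhat_sub_sqrt_le (ha : 0 < a) (haY : a ≤ Y₀) (hY : Y₀ ≤ 2) :
    |Xhat β Y₀ - √(2 * Y₀ - Y₀ ^ 2)| ≤ |cos (π * β / 2)| * √(2 + 8 / a) := by
  have hS := abs_sqrt_cos_pow_four_add_sub_le (β := β) ha haY hY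
  have hX := sq_le_two_mul_sqrt_add β (show Y₀ ^ 2 ≤ 4 by nlinarith)
  set c := cos (π * β / 2)
  set S := √(c ^ 4 + sin (π * β / 2) ^ 2 * Y₀ ^ 2)
  have hdiff : |2 * (S + c ^ 2) - Y₀ ^ 2 - (2 * Y₀ - Y₀ ^ 2)| ≤ c ^ 2 * (2 + 8 / a) :=
    calc |2 * (S + c ^ 2) - Y₀ ^ 2 - (2 * Y₀ - Y₀ ^ 2)| = |2 * (S - Y₀) + 2 * c ^ 2| := by ring_nf
      _ ≤ 2 * |S - Y₀| + 2 * c ^ 2 := by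
          refine (abs_add_le _ _).trans_eq ?_
          rw [abs_mul, abs_two, abs_of_nonneg (by positivity : (0 : ℝ) ≤ 2 * c ^ 2)]
      _ ≤ c ^ 2 * (2 + 8 / a) := by
          rw [mul_add, ← mul_div_assoc]
          linarith [show c ^ 2 * 8 / a = 2 * (4 * c ^ 2 / a) by ring]
  calc |Xhat β Y₀ - √(2 * Y₀ - Y₀ ^ 2)|
      ≤ √|2 * (S + c ^ 2) - Y₀ ^ 2 - (2 * Y₀ - Y₀ ^ 2)| :=
        abs_sqrt_sub_sqrt_le (sub_nonneg.2 hX) (by nlinarith)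
    _ ≤ √(c ^ 2 * (2 + 8 / a)) := sqrt_le_sqrt hdiff
    _ = |c| * √(2 + 8 / a) := by rw [sqrt_mul (sq_nonneg c), sqrt_sq_eq_abs]

lemma xiZero_div_hCNK_le (hc : 0 ≤ cos (π * β / 2)) (hY₀ : 0 < Y₀) :
    xiZero Y₀ β / hCNK β ≤ cos (π * β / 2) ^ 4 / (sin (π * β / 2) ^ 2 * Y₀) := by
  rw [hCNK_eq, div_div_eq_mul_div]
  calc xiZero Y₀ β * (π * cos (π * β / 2) ^ 3) / (4 * sin (π * β / 2) ^ 2)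
      ≤ 4 * cos (π * β / 2) / (π * Y₀) * (π * cos (π * β / 2) ^ 3) / (4 * sin (π * β / 2) ^ 2) := by
        gcongr
        exact xiZero_le hc hY₀.le
    _ = cos (π * β / 2) ^ 4 / (sin (π * β / 2) ^ 2 * Y₀) := by field_simp

lemma abs_xiZero_div_hCNK_add_Xhat_sub_le (hβ : β ∈ Ioo (0 : ℝ) 1) (ha : 0 < a)
    (haY : a ≤ Y₀) (hY : Y₀ ≤ 2) :
    |xiZero Y₀ β / hCNK β + Xhat β Y₀ - √(2 * Y₀ - Y₀ ^ 2)|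
      ≤ cos (π * β / 2) ^ 4 / (sin (π * β / 2) ^ 2 * a) + cos (π * β / 2) * √(2 + 8 / a) := by
  have hc := cos_pi_mul_div_two_pos hβ
  have hs := sin_pi_mul_div_two_pos hβ
  have hY₀ : 0 < Y₀ := ha.trans_le haY
  have hξ : 0 ≤ xiZero Y₀ β / hCNK β :=
    div_nonneg (xiZero_nonneg hc.le hY₀.le) (by rw [hCNK_eq]; positivity)
  have hX := abs_Xhat_sub_sqrt_le (β := β) ha haY hY
  rw [abs_of_pos hc] at hX
  calc |xiZero Y₀ β / hCNK β + Xhat β Y₀ - √(2 * Y₀ - Y₀ ^ 2)|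
      ≤ xiZero Y₀ β / hCNK β + |Xhat β Y₀ - √(2 * Y₀ - Y₀ ^ 2)| := by
        rw [add_sub_assoc]
        exact (abs_add_le _ _).trans_eq (by rw [abs_of_nonneg hξ])
    _ ≤ cos (π * β / 2) ^ 4 / (sin (π * β / 2) ^ 2 * a) + cos (π * β / 2) * √(2 + 8 / a) :=
        add_le_add ((xiZero_div_hCNK_le hc.le hY₀).trans (by gcongr)) hX

end

lemma tendstoUniformlyOn_xiZero_div_hCNK_add_Xhat {a : ℝ} (ha : 0 < a) :
    TendstoUniformlyOn (fun β Y₀ => xiZero Y₀ β / hCNK β + Xhat β Y₀)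
      (fun Y₀ => √(2 * Y₀ - Y₀ ^ 2)) (nhdsWithin 1 (Iio 1)) (Icc a 2) := by
  set B : ℝ → ℝ := fun β =>
    cos (π * β / 2) ^ 4 / (sin (π * β / 2) ^ 2 * a) + cos (π * β / 2) * √(2 + 8 / a)
  have hB : Tendsto B (nhds 1) (nhds 0) := by
    have hcont : ContinuousAt B 1 := by fun_prop (disch := simp [ha.ne'])
    simpa [B] using hcont.tendsto
  rw [Metric.tendstoUniformlyOn_iff]
  intro ε hε
  filter_upwards [nhdsWithin_le_nhds (hB.eventually (gt_mem_nhds hε)),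
    Ioo_mem_nhdsLT zero_lt_one] with β hBβ hβ Y₀ hY₀
  rw [dist_comm, Real.dist_eq]
  exact (abs_xiZero_div_hCNK_add_Xhat_sub_le hβ ha hY₀.1 hY₀.2).trans_lt hBβ

theorem statement18 :
    -- (i) strict monotonicity of `Y(·,β)`
    (∀ β ∈ Ioo (0 : ℝ) 1, StrictAntiOn (Yfun β) (Ici (0 : ℝ))
      ∧ Yfun β 0 = 2 ∧ Tendsto (Yfun β) atTop (nhds 0))
    -- (ii) the inverse `ξ₀(Y₀,β)` and its explicit description, together with
    -- (iii) the locally uniform limit of the rescaled horizontal coordinate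
    ∧ ∃ xi : ℝ → ℝ → ℝ,
      (∀ β ∈ Ioo (0 : ℝ) 1, ∀ Y₀ ∈ Ioc (0 : ℝ) 2,
        xi Y₀ β ∈ Ici (0 : ℝ)
        ∧ Yfun β (xi Y₀ β) = Y₀
        ∧ (∀ ξ' ∈ Ici (0 : ℝ), Yfun β ξ' = Y₀ → ξ' = xi Y₀ β)
        ∧ Real.sinh (Real.pi * xi Y₀ β / 2) = Real.cos (Real.pi * β / 2) / Y₀ * Xhat β Y₀)
      ∧ (∀ ε > 0, ∀ a ∈ Ioc (0 : ℝ) 2, ∃ δ > 0, ∀ β ∈ Ioo (0 : ℝ) 1, 1 - δ < β →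
          ∀ Y₀ ∈ Icc a 2,
            |xi Y₀ β / hCNK β + Xhat β Y₀ - Real.sqrt (2 * Y₀ - Y₀ ^ 2)| < ε) := by
  refine ⟨fun β hβ => ?_, xiZero, fun β hβ Y₀ hY₀ => ?_, fun ε hε a ha => ?_⟩
  · have hc := (cos_pi_mul_div_two_pos hβ).ne'
    exact ⟨Yfun_strictAntiOn hc, Yfun_zero hc, tendsto_Yfun_atTop β⟩
  · have hc := cos_pi_mul_div_two_pos hβ
    have hξ := xiZero_nonneg hc.le hY₀.1.le
    have hY := Yfun_xiZero hc.ne' hY₀.1 hY₀.2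
    exact ⟨hξ, hY, fun ξ' hξ' hYξ' => (Yfun_strictAntiOn hc.ne').injOn hξ' hξ (hYξ'.trans hY.symm),
      sinh_pi_mul_xiZero_div_two Y₀ β⟩
  · obtain ⟨l, hl, hsub⟩ := mem_nhdsLT_iff_exists_Ioo_subset.1
      (Metric.tendstoUniformlyOn_iff.1 (tendstoUniformlyOn_xiZero_div_hCNK_add_Xhat ha.1) ε hε)
    refine ⟨1 - l, sub_pos.2 hl, fun β hβ hlβ Y₀ hY₀ => ?_⟩
    rw [abs_sub_comm, ← Real.dist_eq]
    exact hsub ⟨by linarith, hβ.2⟩ Y₀ hY₀
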